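/- arXiv:2001.11614 — 2 statements merged into one kernel-verified Lean document; each statement's English description precedes it below -/
import Mathlib

section
/- Suppose the moment matrix M_n of a truncated tracial sequence β of degree 2n is recursively generated and in canonical form, i.e., satisfies the column relation XY + YX = 0 and one of the column relations Y² = 1 − X², Y² = 1, Y² = 1 + X², Y² = X². Then every column of M_n is a real linear combination of the 2n+1 columns indexed by the words 1, Xⁱ (1 ≤ i ≤ n), and X^{i−1}Y (1 ≤ i ≤ n); that is, the column space of M_n is spanned by these columns. -/
open Matrix BigOperators

/-- Words in the free monoid on two letters `X = 0`, `Y = 1`. -/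
abbrev Word : Type := List (Fin 2)

/-- Evaluation of a word at a pair of square matrices (`X ↦ A`, `Y ↦ B`). -/
def wEval {m : Type*} [Fintype m] [DecidableEq m] (A B : Matrix m m ℝ) : Word → Matrix m m ℝ
  | [] => 1
  | i :: w => (if i = (0 : Fin 2) then A else B) * wEval A B w

/-- Normalized trace. -/
noncomputable def nTr {m : Type*} [Fintype m] (A : Matrix m m ℝ) : ℝ :=
  A.trace / (Fintype.card m : ℝ)
/-- `v` is a cyclic permutation of `w`. -/
def IsCyc (v w : Word) : Prop := ∃ a b : Word, v = a ++ b ∧ w = b ++ a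

/-- A truncated tracial sequence of degree `2n`. -/
def IsTracialSeq (n : ℕ) (β : Word → ℝ) : Prop :=
  (∀ v w : Word, w.length ≤ 2 * n → IsCyc v w → β v = β w) ∧
  ∀ w : Word, w.length ≤ 2 * n → β w = β w.reverse

/-- `β` is noncommutative: two words with the same commutative collapse get
different values. -/
def IsNCSeq (n : ℕ) (β : Word → ℝ) : Prop :=
  ∃ v w : Word, v.length ≤ 2 * n ∧ w.length ≤ 2 * n ∧
    v.count 0 = w.count 0 ∧ v.count 1 = w.count 1 ∧ β v ≠ β w
/-- Noncommutative polynomials as finitely supported functions on words;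
their product (convolution). -/
noncomputable def polyMul (p q : Word →₀ ℝ) : Word →₀ ℝ :=
  p.sum fun v a => q.sum fun w b => Finsupp.single (v ++ w) (a * b)

/-- The (nc) polynomial `p` has degree at most `k`. -/
def PDegLE (p : Word →₀ ℝ) (k : ℕ) : Prop := ∀ w ∈ p.support, w.length ≤ k
/-- Column relation `p(𝕏,𝕐) = 0` in the moment matrix `M_n(β)`. -/
def ColRel (n : ℕ) (β : Word → ℝ) (p : Word →₀ ℝ) : Prop :=
  ∀ v : Word, v.length ≤ n → ∑ w ∈ p.support, p w * β (v.reverse ++ w) = 0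

/-- `M_n(β)` is recursively generated: whenever `p(𝕏,𝕐)=0` and `deg(pq) ≤ n`,
also `(pq)(𝕏,𝕐)=0` and `(qp)(𝕏,𝕐)=0`. -/
def RGseq (n : ℕ) (β : Word → ℝ) : Prop :=
  ∀ p q : Word →₀ ℝ, ColRel n β p → PDegLE (polyMul p q) n →
    ColRel n β (polyMul p q) ∧ ColRel n β (polyMul q p)
/-- `M_n(β)` is in canonical form: it satisfies `XY + YX = 0` and one of
`Y² = 1 − X²`, `Y² = 1`, `Y² = 1 + X²`, `Y² = X²`. -/
def CanonicalForm (n : ℕ) (β : Word → ℝ) : Prop :=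
  (∀ v : Word, v.length ≤ n → β (v.reverse ++ [0, 1]) + β (v.reverse ++ [1, 0]) = 0) ∧
  ((∀ v : Word, v.length ≤ n → β (v.reverse ++ [1, 1]) = β v.reverse - β (v.reverse ++ [0, 0])) ∨
   (∀ v : Word, v.length ≤ n → β (v.reverse ++ [1, 1]) = β v.reverse) ∨
   (∀ v : Word, v.length ≤ n → β (v.reverse ++ [1, 1]) = β v.reverse + β (v.reverse ++ [0, 0])) ∨
   (∀ v : Word, v.length ≤ n → β (v.reverse ++ [1, 1]) = β (v.reverse ++ [0, 0])))


lemma colRel_iff (n : ℕ) (β : Word → ℝ) (p : Word →₀ ℝ) :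
    ColRel n β p ↔ ∀ v : Word, v.length ≤ n →
      p.sum (fun w c => c * β (v.reverse ++ w)) = 0 := Iff.rfl

lemma polyMul_single_right (p : Word →₀ ℝ) (b : Word) :
    polyMul p (Finsupp.single b 1) = p.mapDomain (· ++ b) := by
  unfold polyMul Finsupp.mapDomain
  congr 1
  funext v a
  rw [Finsupp.sum_single_index (by simp)]
  simp

lemma polyMul_single_left (a : Word) (p : Word →₀ ℝ) :
    polyMul (Finsupp.single a 1) p = p.mapDomain (a ++ ·) := by
  unfold polyMul Finsupp.mapDomain
  rw [Finsupp.sum_single_index (by simp)]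
  simp

lemma sandwich {n : ℕ} {β : Word → ℝ} (hrg : RGseq n β) {p : Word →₀ ℝ} {k : ℕ}
    (hp : ColRel n β p) (hdeg : PDegLE p k) (a b : Word)
    (hab : a.length + k + b.length ≤ n) :
    ∀ v : Word, v.length ≤ n →
      p.sum (fun w c => c * β (v.reverse ++ (a ++ w ++ b))) = 0 := by
  have h1 : polyMul p (Finsupp.single b 1) = p.mapDomain (· ++ b) :=
    polyMul_single_right p b
  have hdeg1 : PDegLE (polyMul p (Finsupp.single b 1)) n := by
    rw [h1]
    intro w hw
    obtain ⟨w', hw', rfl⟩ := Finset.mem_image.1 (Finsupp.mapDomain_support hw)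
    have := hdeg w' hw'
    simp only [List.length_append]
    omega
  have hc1 : ColRel n β (p.mapDomain (· ++ b)) := by
    rw [← h1]; exact (hrg p (Finsupp.single b 1) hp hdeg1).1
  have h2 : polyMul (Finsupp.single a 1) (p.mapDomain (· ++ b))
      = (p.mapDomain (· ++ b)).mapDomain (a ++ ·) :=
    polyMul_single_left a _
  have hdeg2 : PDegLE (polyMul (p.mapDomain (· ++ b)) (Finsupp.single a 1)) n := by
    rw [polyMul_single_right]
    intro w hw
    obtain ⟨w', hw', rfl⟩ := Finset.mem_image.1 (Finsupp.mapDomain_support hw)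
    obtain ⟨w'', hw'', rfl⟩ := Finset.mem_image.1 (Finsupp.mapDomain_support hw')
    have := hdeg w'' hw''
    simp only [List.length_append]
    omega
  have hc2 : ColRel n β ((p.mapDomain (· ++ b)).mapDomain (a ++ ·)) := by
    rw [← h2]
    exact (hrg (p.mapDomain (· ++ b)) (Finsupp.single a 1) hc1 hdeg2).2
  intro v hv
  have := (colRel_iff n β _).1 hc2 v hv
  rw [Finsupp.sum_mapDomain_index (by simp) (by intros; rw [add_mul]),
      Finsupp.sum_mapDomain_index (by simp) (by intros; rw [add_mul])] at this
  simpa [List.append_assoc] using this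

lemma rel_swap {n : ℕ} {β : Word → ℝ} (hrg : RGseq n β) (hcan : CanonicalForm n β)
    (a b : Word) (hab : a.length + b.length + 2 ≤ n) :
    ∀ v : Word, v.length ≤ n →
      β (v.reverse ++ (a ++ [0, 1] ++ b)) = - β (v.reverse ++ (a ++ [1, 0] ++ b)) := by
  set p : Word →₀ ℝ := Finsupp.single [0,1] 1 + Finsupp.single [1,0] 1 with hp
  have hsum : ∀ g : Word → ℝ → ℝ, (∀ w, g w 0 = 0) →
      (∀ w c₁ c₂, g w (c₁ + c₂) = g w c₁ + g w c₂) →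
      p.sum g = g [0,1] 1 + g [1,0] 1 := by
    intro g h0 hadd
    rw [hp, Finsupp.sum_add_index' h0 hadd, Finsupp.sum_single_index (h0 _),
      Finsupp.sum_single_index (h0 _)]
  have hcol : ColRel n β p := by
    rw [colRel_iff]
    intro v hv
    rw [hsum _ (by intro w; ring) (by intro w c₁ c₂; ring)]
    have := hcan.1 v hv
    linarith
  have hdeg : PDegLE p 2 := by
    intro w hw
    have := Finsupp.support_add hw
    simp only [Finset.mem_union, Finsupp.support_single_ne_zero _ (one_ne_zero),
      Finset.mem_singleton] at this
    rcases this with rfl | rfl <;> simp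
  intro v hv
  have := sandwich hrg hcol hdeg a b (by omega) v hv
  rw [hsum _ (by intro w; ring) (by intro w c₁ c₂; ring)] at this
  simp only [one_mul] at this
  linarith

lemma rel_sq {n : ℕ} {β : Word → ℝ} (hrg : RGseq n β) (hcan : CanonicalForm n β) :
    ∃ c0 d0 : ℝ, ∀ a b : Word, a.length + b.length + 2 ≤ n →
      ∀ v : Word, v.length ≤ n →
        β (v.reverse ++ (a ++ [1, 1] ++ b)) =
          c0 * β (v.reverse ++ (a ++ b)) + d0 * β (v.reverse ++ (a ++ [0, 0] ++ b)) := by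
  have key : ∀ c0 d0 : ℝ,
      (∀ v : Word, v.length ≤ n →
        β (v.reverse ++ [1, 1]) = c0 * β v.reverse + d0 * β (v.reverse ++ [0, 0])) →
      ∀ a b : Word, a.length + b.length + 2 ≤ n →
      ∀ v : Word, v.length ≤ n →
        β (v.reverse ++ (a ++ [1, 1] ++ b)) =
          c0 * β (v.reverse ++ (a ++ b)) + d0 * β (v.reverse ++ (a ++ [0, 0] ++ b)) := by
    intro c0 d0 hrel
    set p : Word →₀ ℝ := Finsupp.single [1,1] 1 + Finsupp.single [] (-c0)
      + Finsupp.single [0,0] (-d0) with hp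
    have hsum : ∀ g : Word → ℝ → ℝ, (∀ w, g w 0 = 0) →
        (∀ w c₁ c₂, g w (c₁ + c₂) = g w c₁ + g w c₂) →
        p.sum g = g [1,1] 1 + g [] (-c0) + g [0,0] (-d0) := by
      intro g h0 hadd
      rw [hp, Finsupp.sum_add_index' h0 hadd, Finsupp.sum_add_index' h0 hadd,
        Finsupp.sum_single_index (h0 _), Finsupp.sum_single_index (h0 _),
        Finsupp.sum_single_index (h0 _)]
    have hcol : ColRel n β p := by
      rw [colRel_iff]
      intro v hv
      rw [hsum _ (by intro w; ring) (by intro w c₁ c₂; ring)]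
      have := hrel v hv
      simp only [List.append_nil]
      linarith
    have hdeg : PDegLE p 2 := by
      intro w hw
      have h1 := Finsupp.support_add hw
      simp only [Finset.mem_union] at h1
      rcases h1 with h1 | h1
      · have h2 := Finsupp.support_add h1
        simp only [Finset.mem_union] at h2
        rcases h2 with h2 | h2
        · have := Finsupp.support_single_subset h2
          simp only [Finset.mem_singleton] at this
          subst this; simp
        · have := Finsupp.support_single_subset h2
          simp only [Finset.mem_singleton] at this
          subst this; simp
      · have := Finsupp.support_single_subset h1
        simp only [Finset.mem_singleton] at this
        subst this; simp
    intro a b hab v hv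
    have := sandwich hrg hcol hdeg a b (by omega) v hv
    rw [hsum _ (by intro w; ring) (by intro w c₁ c₂; ring)] at this
    simp only [one_mul, List.append_nil] at this
    linarith
  rcases hcan.2 with h | h | h | h
  · exact ⟨1, -1, key 1 (-1) (by intro v hv; have := h v hv; linarith)⟩
  · exact ⟨1, 0, key 1 0 (by intro v hv; have := h v hv; simp [this])⟩
  · exact ⟨1, 1, key 1 1 (by intro v hv; have := h v hv; linarith)⟩
  · exact ⟨0, 1, key 0 1 (by intro v hv; have := h v hv; simp [this])⟩

def GoodW (n : ℕ) (β : Word → ℝ) (u : Word) : Prop :=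
  ∃ (c : Fin (n + 1) → ℝ) (d : Fin n → ℝ),
    ∀ v : Word, v.length ≤ n →
      β (v.reverse ++ u) =
        (∑ i : Fin (n + 1), c i * β (v.reverse ++ List.replicate (i : ℕ) 0)) +
        ∑ i : Fin n, d i * β (v.reverse ++ (List.replicate (i : ℕ) 0 ++ [1]))

lemma good_comb {n : ℕ} {β : Word → ℝ} {u u₁ u₂ : Word} {s₁ s₂ : ℝ}
    (h : ∀ v : Word, v.length ≤ n →
      β (v.reverse ++ u) = s₁ * β (v.reverse ++ u₁) + s₂ * β (v.reverse ++ u₂))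
    (h₁ : GoodW n β u₁) (h₂ : GoodW n β u₂) : GoodW n β u := by
  obtain ⟨c₁, d₁, hc₁⟩ := h₁
  obtain ⟨c₂, d₂, hc₂⟩ := h₂
  refine ⟨fun i => s₁ * c₁ i + s₂ * c₂ i, fun i => s₁ * d₁ i + s₂ * d₂ i, fun v hv => ?_⟩
  rw [h v hv, hc₁ v hv, hc₂ v hv]
  simp only [add_mul, Finset.sum_add_distrib, mul_add, Finset.mul_sum, mul_assoc]
  ring

lemma good_sorted {n : ℕ} {β : Word → ℝ} (hrg : RGseq n β) (hcan : CanonicalForm n β) :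
    ∀ k m : ℕ, m + k ≤ n →
      GoodW n β (List.replicate m 0 ++ List.replicate k 1) := by
  obtain ⟨c0, d0, hsq⟩ := rel_sq hrg hcan
  intro k
  induction k using Nat.strong_induction_on with
  | _ k ih =>
    match k with
    | 0 =>
      intro m hm
      refine ⟨fun i => if i = (⟨m, by omega⟩ : Fin (n+1)) then 1 else 0, 0, fun v hv => ?_⟩
      simp only [ite_mul, one_mul, zero_mul, Finset.sum_ite_eq', Finset.mem_univ, if_true,
        Pi.zero_apply, Finset.sum_const_zero, add_zero, List.replicate_zero, List.append_nil]
    | 1 =>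
      intro m hm
      refine ⟨0, fun i => if i = (⟨m, by omega⟩ : Fin n) then 1 else 0, fun v hv => ?_⟩
      simp only [ite_mul, one_mul, zero_mul, Finset.sum_ite_eq', Finset.mem_univ, if_true,
        Pi.zero_apply, Finset.sum_const_zero, zero_add, List.replicate_one]
    | (k' + 2) =>
      intro m hm
      have e1 : List.replicate m (0 : Fin 2) ++ List.replicate (k' + 2) 1
          = List.replicate m 0 ++ [1, 1] ++ List.replicate k' 1 := by
        rw [show k' + 2 = 2 + k' by omega, List.replicate_add, ← List.append_assoc]
        rfl
      have e2 : List.replicate m (0 : Fin 2) ++ [0, 0] ++ List.replicate k' 1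
          = List.replicate (m + 2) 0 ++ List.replicate k' 1 := by
        rw [List.replicate_add]
        rfl
      have h := fun v hv => hsq (List.replicate m 0) (List.replicate k' 1)
        (by simp; omega) v hv
      rw [e1]
      refine good_comb (u₁ := List.replicate m 0 ++ List.replicate k' 1)
        (u₂ := List.replicate (m + 2) 0 ++ List.replicate k' 1)
        (fun v hv => by rw [h v hv, e2]) ?_ ?_
      · exact ih k' (by omega) m (by omega)
      · exact ih k' (by omega) (m + 2) (by omega)

def invc : Word → ℕ
  | [] => 0
  | x :: w => (if x = 1 then w.count 0 else 0) + invc w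

lemma invc_cons (x : Fin 2) (w : Word) :
    invc (x :: w) = (if x = 1 then w.count 0 else 0) + invc w := rfl

lemma count_swap (a b : Word) (x : Fin 2) :
    (a ++ [1, 0] ++ b).count x = (a ++ [0, 1] ++ b).count x := by
  have hx : x = 0 ∨ x = 1 := by omega
  rcases hx with rfl | rfl <;> simp [List.count_append, List.count_cons]

lemma invc_swap (a b : Word) :
    invc (a ++ [1, 0] ++ b) = invc (a ++ [0, 1] ++ b) + 1 := by
  induction a with
  | nil =>
    norm_num [invc_cons, List.count_cons]
    omega
  | cons x a ih =>
    simp only [List.cons_append, invc_cons]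
    rw [count_swap a b 0, ih]
    omega

lemma sorted_or_swap : ∀ u : Word,
    u = List.replicate (u.count 0) 0 ++ List.replicate (u.count 1) 1 ∨
    ∃ a b : Word, u = a ++ [1, 0] ++ b := by
  intro u
  induction u with
  | nil => left; rfl
  | cons x w ih =>
    have hx : x = 0 ∨ x = 1 := by omega
    rcases hx with rfl | rfl
    · rcases ih with h | ⟨a, b, rfl⟩
      · left
        rw [List.count_cons_self, List.count_cons_of_ne (by decide)]
        rw [List.replicate_succ, List.cons_append]
        exact congrArg _ h
      · right; exact ⟨0 :: a, b, rfl⟩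
    · rcases ih with h | ⟨a, b, rfl⟩
      · cases hw0 : w.count 0 with
        | zero =>
          left
          rw [List.count_cons_of_ne (by decide), List.count_cons_self, hw0,
            List.replicate_zero, List.nil_append, List.replicate_succ]
          rw [hw0, List.replicate_zero, List.nil_append] at h
          rw [← h]
        | succ k =>
          right
          rw [hw0, List.replicate_succ] at h
          exact ⟨[], List.replicate k 0 ++ List.replicate (w.count 1) 1, by
            rw [List.nil_append]
            conv_lhs => rw [h]
            rfl⟩
      · right; exact ⟨1 :: a, b, rfl⟩

lemma count_length (u : Word) : u.count 0 + u.count 1 = u.length := by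
  induction u with
  | nil => rfl
  | cons x w ih =>
    have hx : x = 0 ∨ x = 1 := by omega
    rcases hx with rfl | rfl <;>
      simp [List.count_cons, ← ih] <;> omega

lemma sort_step {n : ℕ} {β : Word → ℝ} (hrg : RGseq n β) (hcan : CanonicalForm n β) :
    ∀ N : ℕ, ∀ u : Word, invc u ≤ N → u.length ≤ n →
      ∃ s : ℝ, ∀ v : Word, v.length ≤ n →
        β (v.reverse ++ u) =
          s * β (v.reverse ++ (List.replicate (u.count 0) 0 ++ List.replicate (u.count 1) 1)) := by
  intro N
  induction N with
  | zero =>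
    intro u hinv hlen
    rcases sorted_or_swap u with h | ⟨a, b, rfl⟩
    · exact ⟨1, fun v hv => by rw [one_mul]; exact congrArg _ (by rw [← h])⟩
    · exfalso
      have := invc_swap a b
      omega
  | succ N ih =>
    intro u hinv hlen
    rcases sorted_or_swap u with h | ⟨a, b, rfl⟩
    · exact ⟨1, fun v hv => by rw [one_mul]; exact congrArg _ (by rw [← h])⟩
    · have hab : a.length + b.length + 2 ≤ n := by
        simp only [List.length_append, List.length_cons, List.length_nil] at hlen
        omega
      have hlen' : (a ++ [0, 1] ++ b).length ≤ n := by
        simp only [List.length_append, List.length_cons, List.length_nil]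
        omega
      have hinv' : invc (a ++ [0, 1] ++ b) ≤ N := by
        have := invc_swap a b; omega
      obtain ⟨s, hs⟩ := ih (a ++ [0, 1] ++ b) hinv' hlen'
      refine ⟨-s, fun v hv => ?_⟩
      have hswap := rel_swap hrg hcan a b hab v hv
      have hc0 := count_swap a b 0
      have hc1 := count_swap a b 1
      rw [show β (v.reverse ++ (a ++ [1, 0] ++ b)) = - β (v.reverse ++ (a ++ [0, 1] ++ b)) by
        linarith, hs v hv, hc0, hc1]
      ring
theorem stmt15 (n : ℕ) (β : Word → ℝ) (hβ : IsTracialSeq n β) (hrg : RGseq n β)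
    (hcan : CanonicalForm n β) :
    ∀ u : Word, u.length ≤ n →
      ∃ (c : Fin (n + 1) → ℝ) (d : Fin n → ℝ),
        ∀ v : Word, v.length ≤ n →
          β (v.reverse ++ u) =
            (∑ i : Fin (n + 1), c i * β (v.reverse ++ List.replicate (i : ℕ) 0)) +
            ∑ i : Fin n, d i * β (v.reverse ++ (List.replicate (i : ℕ) 0 ++ [1])) := by
  intro u hu
  obtain ⟨s, hs⟩ := sort_step hrg hcan (invc u) u le_rfl hu
  have hcl := count_length u
  have hg : GoodW n β (List.replicate (u.count 0) 0 ++ List.replicate (u.count 1) 1) :=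
    good_sorted hrg hcan (u.count 1) (u.count 0) (by omega)
  have hg0 : GoodW n β ([] : Word) := by
    simpa using good_sorted hrg hcan 0 0 (by omega)
  exact good_comb (s₁ := s) (s₂ := 0) (fun v hv => by rw [hs v hv]; ring) hg hg0
end

section
/- Let n ≥ 2 and let β be an nc truncated tracial sequence of degree 2n whose moment matrix M_n is in canonical form, i.e., satisfies the column relation XY + YX = 0 and one of the column relations R being Y² = 1 − X², Y² = 1, Y² = 1 + X², Y² = X². If β admits an nc measure, then: (1) β_{X^{2i+1}} = β_X for every i ∈ ℕ with 2i+1 ≤ 2n; (2) β_{X^{j}Y} = 0 for every j ∈ ℕ, j ≥ 1, with j+1 ≤ 2n; (3) β_{X^{k}Y²} = 0 for every odd k with k+2 ≤ 2n; and (4) depending on the second relation: if R is Y² = 1 − X², then β_{X^kY²} = β_{X^k} − β_{X^{k+2}} for every k with k+2 ≤ 2n; if R is Y² = 1 or Y² = 1 + X², then β_X = 0; if R is Y² = 1, then β_{X^kY²} = β_{X^k} for every k with k+2 ≤ 2n; if R is Y² = 1 + X², then β_{X^kY²} = β_{X^k} + β_{X^{k+2}} for every k with k+2 ≤ 2n;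 if R is Y² = X², then β_{X^kY²} = β_{X^{k+2}} for every k with k+2 ≤ 2n. -/
open Matrix BigOperators

/-- A finitely atomic tracial representing measure for `β` (degree `2n`). -/
structure RepMeas (n : ℕ) (β : Word → ℝ) where
  k : ℕ
  size : Fin k → ℕ
  sizePos : ∀ i, 0 < size i
  matA : (i : Fin k) → Matrix (Fin (size i)) (Fin (size i)) ℝ
  matB : (i : Fin k) → Matrix (Fin (size i)) (Fin (size i)) ℝ
  symA : ∀ i, (matA i).IsSymm
  symB : ∀ i, (matB i).IsSymm
  lam : Fin k → ℝ
  lamPos : ∀ i, 0 < lam i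
  lamSum : ∑ i, lam i = 1
  rep : ∀ w : Word, w.length ≤ 2 * n → β w = ∑ i, lam i * nTr (wEval (matA i) (matB i) w)

def AdmitsMeasure (n : ℕ) (β : Word → ℝ) : Prop := Nonempty (RepMeas n β)

/-- An nc measure: a representing measure with at least one atom of size `≥ 2`. -/
def AdmitsNCMeasure (n : ℕ) (β : Word → ℝ) : Prop := ∃ μ : RepMeas n β, ∃ i, 2 ≤ μ.size i

/-- A representing measure of type `(m,1)`: exactly `m` atoms of size 1 and
exactly one atom of size 2 (and no larger atoms). -/
def AdmitsTypeM1 (n : ℕ) (β : Word → ℝ) (m : ℕ) : Prop :=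
  ∃ μ : RepMeas n β, (∀ i, μ.size i = 1 ∨ μ.size i = 2) ∧
    (Finset.univ.filter fun i => μ.size i = 1).card = m ∧
    (Finset.univ.filter fun i => μ.size i = 2).card = 1

/-- Column relation `XY + YX = 0` in `M_n(β)`. -/
def RelXYYX (n : ℕ) (β : Word → ℝ) : Prop :=
  ∀ v : Word, v.length ≤ n → β (v.reverse ++ [0, 1]) + β (v.reverse ++ [1, 0]) = 0

/-- Column relation `Y² = 1 − X²` in `M_n(β)`. -/
def RelA (n : ℕ) (β : Word → ℝ) : Prop :=
  ∀ v : Word, v.length ≤ n → β (v.reverse ++ [1, 1]) = β v.reverse - β (v.reverse ++ [0, 0])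

/-- Column relation `Y² = 1` in `M_n(β)`. -/
def RelB (n : ℕ) (β : Word → ℝ) : Prop :=
  ∀ v : Word, v.length ≤ n → β (v.reverse ++ [1, 1]) = β v.reverse

/-- Column relation `Y² = 1 + X²` in `M_n(β)`. -/
def RelC (n : ℕ) (β : Word → ℝ) : Prop :=
  ∀ v : Word, v.length ≤ n → β (v.reverse ++ [1, 1]) = β v.reverse + β (v.reverse ++ [0, 0])

/-- Column relation `Y² = X²` in `M_n(β)`. -/
def RelD (n : ℕ) (β : Word → ℝ) : Prop :=
  ∀ v : Word, v.length ≤ n → β (v.reverse ++ [1, 1]) = β (v.reverse ++ [0, 0])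

/-
Every atom `(A, B)` of a representing measure satisfies each column relation `p` of `M_n(β)`:
the quadratic form of `M_n(β)` at the coefficients of `p` equals `∑ᵢ λᵢ nTr (p(Aᵢ,Bᵢ)ᵀ p(Aᵢ,Bᵢ))`,
a sum of nonnegative terms, so it vanishes only if every `p(Aᵢ,Bᵢ)` does. Thus `AB = -BA` and
`B² = c₀ + c₁ A²` on every atom, and all claims become trace identities for such pairs.
As `B Aᵏ = -Aᵏ B` for odd `k`, cycling `B` through the trace gives `tr (Aᵏ B² G) = 0` for odd
`k` and any `G` commuting with `B`; with `G = 1` this gives `tr A^(k+2) = tr A^k` when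
`Y² = 1 - X²`. In the three other cases `c₀ + c₁ x²` vanishes only at `0`, and
`G = (c₀ + c₁ A²)⁻¹` makes `Aᵏ B² G = Aᵏ`, so `tr Aᵏ = 0` for every odd `k`.
-/

section Words

variable {m : Type*} [Fintype m] [DecidableEq m] (A B : Matrix m m ℝ)

@[simp] lemma wEval_nil : wEval A B [] = 1 := rfl

@[simp] lemma wEval_cons_zero (w : Word) : wEval A B (0 :: w) = A * wEval A B w := rfl

@[simp] lemma wEval_cons_one (w : Word) : wEval A B (1 :: w) = B * wEval A B w := rfl

lemma wEval_append (u v : Word) : wEval A B (u ++ v) = wEval A B u * wEval A B v := by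
  induction u with
  | nil => simp
  | cons a u ih => simp only [List.cons_append, wEval, ih, Matrix.mul_assoc]

lemma wEval_replicate_zero (k : ℕ) : wEval A B (List.replicate k 0) = A ^ k := by
  induction k with
  | zero => simp
  | succ k ih => rw [List.replicate_succ, wEval_cons_zero, ih, pow_succ']

variable {A B} in
lemma transpose_wEval (hA : A.IsSymm) (hB : B.IsSymm) (w : Word) :
    (wEval A B w)ᵀ = wEval A B w.reverse := by
  induction w with
  | nil => simp
  | cons a w ih =>
    rw [wEval, transpose_mul, ih, List.reverse_cons, wEval_append]
    fin_cases a <;> simp [hA.eq, hB.eq]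

end Words

/-- The column relation `∑ⱼ cⱼ wⱼ(𝕏, 𝕐) = 0` in `M_n(β)`. -/
def IsColumnRelation (n : ℕ) (β : Word → ℝ) {ι : Type*} [Fintype ι] (c : ι → ℝ)
    (w : ι → Word) : Prop :=
  ∀ v : Word, v.length ≤ n → ∑ j, c j * β (v.reverse ++ w j) = 0

def polyEval {m : Type*} [Fintype m] [DecidableEq m] {ι : Type*} [Fintype ι] (c : ι → ℝ)
    (w : ι → Word) (A B : Matrix m m ℝ) : Matrix m m ℝ :=
  ∑ j, c j • wEval A B (w j)

def RelSq (n : ℕ) (β : Word → ℝ) (c₀ c₁ : ℝ) : Prop :=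
  ∀ v : Word, v.length ≤ n →
    β (v.reverse ++ [1, 1]) = c₀ * β v.reverse + c₁ * β (v.reverse ++ [0, 0])

section CanonicalRelations

variable {n : ℕ} {β : Word → ℝ}

lemma RelA.relSq (h : RelA n β) : RelSq n β 1 (-1) := fun v hv => by rw [h v hv]; ring

lemma RelB.relSq (h : RelB n β) : RelSq n β 1 0 := fun v hv => by rw [h v hv]; ring

lemma RelC.relSq (h : RelC n β) : RelSq n β 1 1 := fun v hv => by rw [h v hv]; ring

lemma RelD.relSq (h : RelD n β) : RelSq n β 0 1 := fun v hv => by rw [h v hv]; ring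

end CanonicalRelations

section Anticommuting

variable {m : Type*} [Fintype m] [DecidableEq m] {A B : Matrix m m ℝ}

lemma mul_pow_odd_of_anticommute (hAB : A * B = -(B * A)) {k : ℕ} (hk : Odd k) :
    B * A ^ k = -(A ^ k * B) := by
  have h : SemiconjBy B A (-A) := by rw [SemiconjBy, neg_mul, hAB, neg_neg]
  simpa [SemiconjBy, hk.neg_pow] using h.pow_right k

lemma commute_sq_of_anticommute (hAB : A * B = -(B * A)) : Commute (A ^ 2) B := by
  rw [commute_iff_eq, sq, Matrix.mul_assoc, hAB, Matrix.mul_neg, ← Matrix.mul_assoc, hAB,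
    Matrix.neg_mul, neg_neg, Matrix.mul_assoc]

lemma trace_pow_mul_eq_zero (hAB : A * B = -(B * A)) {j : ℕ} (hj : j ≠ 0) :
    (A ^ j * B).trace = 0 := by
  obtain ⟨j, rfl⟩ := Nat.exists_eq_succ_of_ne_zero hj
  have h : (A ^ (j + 1) * B).trace = -(A ^ (j + 1) * B).trace :=
    calc (A ^ (j + 1) * B).trace = (A ^ j * (A * B)).trace := by rw [pow_succ, Matrix.mul_assoc]
      _ = -(A ^ j * B * A).trace := by rw [hAB]; simp [Matrix.mul_assoc]
      _ = -(A ^ (j + 1) * B).trace := by rw [trace_mul_comm, ← Matrix.mul_assoc, ← pow_succ']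
  linarith

lemma trace_pow_mul_sq_mul_eq_zero (hAB : A * B = -(B * A)) {G : Matrix m m ℝ}
    (hG : Commute B G) {k : ℕ} (hk : Odd k) : (A ^ k * B ^ 2 * G).trace = 0 := by
  have h : (A ^ k * B ^ 2 * G).trace = -(A ^ k * B ^ 2 * G).trace :=
    calc (A ^ k * B ^ 2 * G).trace = (A ^ k * B * G * B).trace := by
          rw [sq, Matrix.mul_assoc (A ^ k * B) G, ← hG.eq]; simp only [Matrix.mul_assoc]
      _ = (B * A ^ k * B * G).trace := by rw [trace_mul_comm]; simp only [Matrix.mul_assoc]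
      _ = -(A ^ k * B ^ 2 * G).trace := by
          rw [mul_pow_odd_of_anticommute hAB hk]; simp [sq, Matrix.mul_assoc]
  linarith

lemma trace_pow_mul_sq {c₀ c₁ : ℝ} (hR : B ^ 2 = c₀ • 1 + c₁ • A ^ 2) (k : ℕ) :
    (A ^ k * B ^ 2).trace = c₀ * (A ^ k).trace + c₁ * (A ^ (k + 2)).trace := by
  rw [hR, Matrix.mul_add, Matrix.mul_smul, Matrix.mul_smul, Matrix.mul_one, ← pow_add,
    trace_add, trace_smul, trace_smul, smul_eq_mul, smul_eq_mul]

lemma trace_pow_odd_eq_trace (hAB : A * B = -(B * A)) (hR : B ^ 2 = 1 - A ^ 2) (i : ℕ) :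
    (A ^ (2 * i + 1)).trace = A.trace := by
  induction i with
  | zero => simp
  | succ i ih =>
    have h := trace_pow_mul_sq (A := A) (c₀ := 1) (c₁ := -1) (by rw [hR]; module)
      (2 * i + 1)
    rw [← Matrix.mul_one (A ^ (2 * i + 1) * B ^ 2),
      trace_pow_mul_sq_mul_eq_zero hAB (Commute.one_right B) (odd_two_mul_add_one i)] at h
    rw [show 2 * (i + 1) + 1 = 2 * i + 1 + 2 by ring]
    linarith

/- `G = (c₀ + c₁ A²)⁻¹` by functional calculus commutes with `B`, and `Aᵏ B² G = Aᵏ` because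
`x ↦ xᵏ (c₀ + c₁ x²) (c₀ + c₁ x²)⁻¹` is `x ↦ xᵏ`: where `c₀ + c₁ x² = 0` we have `x = 0`
(and `0⁻¹ = 0`). -/
lemma trace_pow_odd_eq_zero (hA : IsSelfAdjoint A) (hAB : A * B = -(B * A)) {c₀ c₁ : ℝ}
    (hR : B ^ 2 = c₀ • 1 + c₁ • A ^ 2) (hc : ∀ x : ℝ, c₀ + c₁ * x ^ 2 = 0 → x = 0)
    {k : ℕ} (hk : Odd k) : (A ^ k).trace = 0 := by
  have hcont : ∀ f : ℝ → ℝ, ContinuousOn f (spectrum ℝ A) := fun f =>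
    (Matrix.finite_spectrum A).continuousOn f
  set G := cfc (fun y => (c₀ + c₁ * y)⁻¹) (A ^ 2)
  have hG : Commute B G := ((commute_sq_of_anticommute hAB).cfc_real _).symm
  have hGA : G = cfc (fun x => (c₀ + c₁ * x ^ 2)⁻¹) A :=
    (cfc_comp_pow (fun y => (c₀ + c₁ * y)⁻¹) 2 A
      ((Matrix.finite_spectrum A).image _ |>.continuousOn _)).symm
  have hpoly : c₀ • 1 + c₁ • A ^ 2 = cfc (fun x => c₀ + c₁ * x ^ 2) A := by
    rw [cfc_add (hf := hcont _) (hg := hcont _), cfc_const_mul c₁ (fun x => x ^ 2) A (hcont _),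
      cfc_pow_id (R := ℝ) A 2, cfc_const c₀ A, Algebra.algebraMap_eq_smul_one]
  have hAk : A ^ k * B ^ 2 * G = A ^ k := by
    rw [hR, hGA, hpoly, ← cfc_pow_id (R := ℝ) A k, ← cfc_mul (hf := hcont _) (hg := hcont _),
      ← cfc_mul (hf := hcont _) (hg := hcont _)]
    refine cfc_congr fun x _ => ?_
    by_cases h : c₀ + c₁ * x ^ 2 = 0
    · simp [hc x h, hk.pos.ne']
    · field_simp
  rw [← hAk]
  exact trace_pow_mul_sq_mul_eq_zero hAB hG hk

end Anticommuting

namespace RepMeas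

variable {n : ℕ} {β : Word → ℝ} (μ : RepMeas n β)

lemma eq_zero_of_sum_nTr_transpose_mul_self_eq_zero
    (C : ∀ i, Matrix (Fin (μ.size i)) (Fin (μ.size i)) ℝ)
    (h : ∑ i, μ.lam i * nTr ((C i)ᵀ * C i) = 0) (i : Fin μ.k) : C i = 0 := by
  have htr : ∀ i, 0 ≤ ((C i)ᵀ * C i).trace := fun i => by
    simpa [conjTranspose_eq_transpose_of_trivial] using
      (posSemidef_conjTranspose_mul_self (C i)).trace_nonneg
  have hterm : ∀ i ∈ Finset.univ, 0 ≤ μ.lam i * nTr ((C i)ᵀ * C i) := fun i _ =>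
    mul_nonneg (μ.lamPos i).le (div_nonneg (htr i) (Nat.cast_nonneg _))
  have hi := (Finset.sum_eq_zero_iff_of_nonneg hterm).1 h i (Finset.mem_univ i)
  simp only [nTr, Fintype.card_fin, mul_eq_zero, div_eq_zero_iff, Nat.cast_eq_zero,
    (μ.lamPos i).ne', (μ.sizePos i).ne', false_or, or_false] at hi
  rwa [← trace_conjTranspose_mul_self_eq_zero_iff, conjTranspose_eq_transpose_of_trivial]

/- `∑ᵢ λᵢ nTr (p(Aᵢ, Bᵢ)ᵀ p(Aᵢ, Bᵢ))` is the value of the quadratic form of `M_n(β)` at the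
coefficient vector of `p`, which vanishes for a column relation. -/
theorem polyEval_eq_zero {ι : Type*} [Fintype ι] {c : ι → ℝ} {w : ι → Word}
    (hw : ∀ j, (w j).length ≤ n) (h : IsColumnRelation n β c w) (i : Fin μ.k) :
    polyEval c w (μ.matA i) (μ.matB i) = 0 := by
  refine μ.eq_zero_of_sum_nTr_transpose_mul_self_eq_zero
    (fun i => polyEval c w (μ.matA i) (μ.matB i)) ?_ i
  have hrep : ∀ j k, β ((w j).reverse ++ w k) =
      ∑ i, μ.lam i * nTr (wEval (μ.matA i) (μ.matB i) ((w j).reverse ++ w k)) := fun j k =>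
    μ.rep _ (by simp only [List.length_append, List.length_reverse]; linarith [hw j, hw k])
  calc ∑ i, μ.lam i * nTr ((polyEval c w (μ.matA i) (μ.matB i))ᵀ
        * polyEval c w (μ.matA i) (μ.matB i))
      = ∑ j, c j * ∑ k, c k * β ((w j).reverse ++ w k) := by
        simp only [hrep, polyEval, transpose_sum, transpose_smul,
          transpose_wEval (μ.symA _) (μ.symB _), Finset.sum_mul, Finset.mul_sum, smul_mul_smul,
          ← wEval_append, nTr, trace_sum, trace_smul, smul_eq_mul, Finset.sum_div]
        rw [Finset.sum_comm]
        conv_rhs => rw [Finset.sum_comm]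
        refine Finset.sum_congr rfl fun k _ => ?_
        rw [Finset.sum_comm]
        exact Finset.sum_congr rfl fun j _ => Finset.sum_congr rfl fun i _ => by ring
    _ = 0 := by simp [h _ (hw _)]

lemma matA_mul_matB (hn : 2 ≤ n) (h : RelXYYX n β) (i : Fin μ.k) :
    μ.matA i * μ.matB i = -(μ.matB i * μ.matA i) := by
  have hrel : IsColumnRelation n β ![1, 1] ![[0, 1], [1, 0]] := fun v hv => by
    simpa using h v hv
  have := μ.polyEval_eq_zero (fun j => by fin_cases j <;> simp <;> omega) hrel i
  simpa [polyEval, eq_neg_iff_add_eq_zero] using this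

lemma matB_sq (hn : 2 ≤ n) {c₀ c₁ : ℝ} (h : RelSq n β c₀ c₁) (i : Fin μ.k) :
    μ.matB i ^ 2 = c₀ • 1 + c₁ • μ.matA i ^ 2 := by
  have hrel : IsColumnRelation n β ![1, -c₀, -c₁] ![[1, 1], [], [0, 0]] := fun v hv => by
    simp [Fin.sum_univ_three, h v hv]
  have := μ.polyEval_eq_zero (fun j => by fin_cases j <;> simp <;> omega) hrel i
  simp [polyEval, Fin.sum_univ_three] at this
  rw [sq, sq, ← sub_eq_zero, ← this]
  abel

lemma moment_eq_of_trace_eq {w u v : Word} (hw : w.length ≤ 2 * n) (hu : u.length ≤ 2 * n)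
    (hv : v.length ≤ 2 * n) (a b : ℝ)
    (h : ∀ i, (wEval (μ.matA i) (μ.matB i) w).trace =
      a * (wEval (μ.matA i) (μ.matB i) u).trace + b * (wEval (μ.matA i) (μ.matB i) v).trace) :
    β w = a * β u + b * β v := by
  rw [μ.rep w hw, μ.rep u hu, μ.rep v hv, Finset.mul_sum, Finset.mul_sum,
    ← Finset.sum_add_distrib]
  refine Finset.sum_congr rfl fun i _ => ?_
  rw [nTr, nTr, nTr, h]
  ring

lemma moment_eq_zero_of_trace_eq_zero {w : Word} (hw : w.length ≤ 2 * n)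
    (h : ∀ i, (wEval (μ.matA i) (μ.matB i) w).trace = 0) : β w = 0 := by
  simp [μ.rep w hw, nTr, h]

lemma trace_matA_pow_odd_eq_zero (hn : 2 ≤ n) (h1 : RelXYYX n β)
    (h2 : RelB n β ∨ RelC n β ∨ RelD n β) (i : Fin μ.k) {k : ℕ} (hk : Odd k) :
    (μ.matA i ^ k).trace = 0 := by
  have hA : IsSelfAdjoint (μ.matA i) := by
    simpa [IsSelfAdjoint, star_eq_conjTranspose, conjTranspose_eq_transpose_of_trivial] using
      (μ.symA i).eq
  rcases h2 with hB | hC | hD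
  · exact trace_pow_odd_eq_zero hA (μ.matA_mul_matB hn h1 i) (μ.matB_sq hn hB.relSq i)
      (fun x h => by norm_num at h) hk
  · exact trace_pow_odd_eq_zero hA (μ.matA_mul_matB hn h1 i) (μ.matB_sq hn hC.relSq i)
      (fun x h => by nlinarith [sq_nonneg x]) hk
  · exact trace_pow_odd_eq_zero hA (μ.matA_mul_matB hn h1 i) (μ.matB_sq hn hD.relSq i)
      (fun x h => by simpa using h) hk

lemma moment_X_pow_odd (μ : RepMeas n β) (hn : 2 ≤ n) (h1 : RelXYYX n β)
    (h2 : RelA n β ∨ RelB n β ∨ RelC n β ∨ RelD n β) {i : ℕ} (hi : 2 * i + 1 ≤ 2 * n) :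
    β (List.replicate (2 * i + 1) 0) = β [0] := by
  have htr : ∀ j, (μ.matA j ^ (2 * i + 1)).trace = (μ.matA j).trace := by
    rcases h2 with hA | hBCD
    · intro j
      exact trace_pow_odd_eq_trace (μ.matA_mul_matB hn h1 j)
        (by simpa [sub_eq_add_neg] using μ.matB_sq hn hA.relSq j) i
    · intro j
      rw [μ.trace_matA_pow_odd_eq_zero hn h1 hBCD j (odd_two_mul_add_one i)]
      simpa using (μ.trace_matA_pow_odd_eq_zero hn h1 hBCD j odd_one).symm
  simpa using μ.moment_eq_of_trace_eq (u := [0]) (v := [0]) (by simpa using hi)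
    (by simp; omega) (by simp; omega) 1 0 fun j => by simpa [wEval_replicate_zero] using htr j

lemma moment_X_eq_zero (μ : RepMeas n β) (hn : 2 ≤ n) (h1 : RelXYYX n β)
    (h2 : RelB n β ∨ RelC n β) : β [0] = 0 :=
  μ.moment_eq_zero_of_trace_eq_zero (by simp; omega) fun i => by
    simpa using μ.trace_matA_pow_odd_eq_zero hn h1 (h2.elim Or.inl (Or.inr ∘ Or.inl)) i odd_one

lemma moment_X_pow_Y_eq_zero (μ : RepMeas n β) (hn : 2 ≤ n) (h : RelXYYX n β) {j : ℕ}
    (hj : j ≠ 0) (hj' : j + 1 ≤ 2 * n) : β (List.replicate j 0 ++ [1]) = 0 :=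
  μ.moment_eq_zero_of_trace_eq_zero (by simpa using hj') fun i => by
    simpa [wEval_append, wEval_replicate_zero] using
      trace_pow_mul_eq_zero (μ.matA_mul_matB hn h i) hj

lemma moment_X_pow_Y_sq_eq_zero (μ : RepMeas n β) (hn : 2 ≤ n) (h : RelXYYX n β) {k : ℕ}
    (hk : Odd k) (hk' : k + 2 ≤ 2 * n) : β (List.replicate k 0 ++ [1, 1]) = 0 :=
  μ.moment_eq_zero_of_trace_eq_zero (by simpa using hk') fun i => by
    simpa [wEval_append, wEval_replicate_zero, sq] using
      trace_pow_mul_sq_mul_eq_zero (μ.matA_mul_matB hn h i) (Commute.one_right _) hk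

lemma moment_X_pow_Y_sq (μ : RepMeas n β) (hn : 2 ≤ n) {c₀ c₁ : ℝ} (h : RelSq n β c₀ c₁)
    {k : ℕ} (hk : k + 2 ≤ 2 * n) :
    β (List.replicate k 0 ++ [1, 1]) =
      c₀ * β (List.replicate k 0) + c₁ * β (List.replicate (k + 2) 0) :=
  μ.moment_eq_of_trace_eq (by simpa using hk) (by simp; omega) (by simpa using hk) c₀ c₁
    fun i => by
      simpa [wEval_append, wEval_replicate_zero, sq] using trace_pow_mul_sq (μ.matB_sq hn h i) k

end RepMeas

theorem stmt17_general (n : ℕ) (hn : 2 ≤ n) (β : Word → ℝ)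
    (hrel1 : RelXYYX n β)
    (hrel2 : RelA n β ∨ RelB n β ∨ RelC n β ∨ RelD n β)
    (hmeas : AdmitsNCMeasure n β) :
    (∀ i : ℕ, 2 * i + 1 ≤ 2 * n → β (List.replicate (2 * i + 1) 0) = β [0]) ∧
    (∀ j : ℕ, 1 ≤ j → j + 1 ≤ 2 * n → β (List.replicate j 0 ++ [1]) = 0) ∧
    (∀ k : ℕ, Odd k → k + 2 ≤ 2 * n → β (List.replicate k 0 ++ [1, 1]) = 0) ∧
    (RelA n β → ∀ k : ℕ, k + 2 ≤ 2 * n →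
      β (List.replicate k 0 ++ [1, 1]) =
        β (List.replicate k 0) - β (List.replicate (k + 2) 0)) ∧
    ((RelB n β ∨ RelC n β) → β [0] = 0) ∧
    (RelB n β → ∀ k : ℕ, k + 2 ≤ 2 * n →
      β (List.replicate k 0 ++ [1, 1]) = β (List.replicate k 0)) ∧
    (RelC n β → ∀ k : ℕ, k + 2 ≤ 2 * n →
      β (List.replicate k 0 ++ [1, 1]) =
        β (List.replicate k 0) + β (List.replicate (k + 2) 0)) ∧
    (RelD n β → ∀ k : ℕ, k + 2 ≤ 2 * n →
      β (List.replicate k 0 ++ [1, 1]) = β (List.replicate (k + 2) 0)) := by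
  obtain ⟨μ, -⟩ := hmeas
  refine ⟨fun i hi => μ.moment_X_pow_odd hn hrel1 hrel2 hi,
    fun j hj hj' => μ.moment_X_pow_Y_eq_zero hn hrel1 (by omega) hj',
    fun k hk hk' => μ.moment_X_pow_Y_sq_eq_zero hn hrel1 hk hk',
    fun h k hk => ?_, μ.moment_X_eq_zero hn hrel1,
    fun h k hk => ?_, fun h k hk => ?_, fun h k hk => ?_⟩
  · simpa [sub_eq_add_neg] using μ.moment_X_pow_Y_sq hn h.relSq hk
  · simpa using μ.moment_X_pow_Y_sq hn h.relSq hk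
  · simpa using μ.moment_X_pow_Y_sq hn h.relSq hk
  · simpa using μ.moment_X_pow_Y_sq hn h.relSq hk

theorem stmt17 (n : ℕ) (hn : 2 ≤ n) (β : Word → ℝ) (hβ : IsTracialSeq n β)
    (hnc : IsNCSeq n β) (hrel1 : RelXYYX n β)
    (hrel2 : RelA n β ∨ RelB n β ∨ RelC n β ∨ RelD n β)
    (hmeas : AdmitsNCMeasure n β) :
    (∀ i : ℕ, 2 * i + 1 ≤ 2 * n → β (List.replicate (2 * i + 1) 0) = β [0]) ∧
    (∀ j : ℕ, 1 ≤ j → j + 1 ≤ 2 * n → β (List.replicate j 0 ++ [1]) = 0) ∧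
    (∀ k : ℕ, Odd k → k + 2 ≤ 2 * n → β (List.replicate k 0 ++ [1, 1]) = 0) ∧
    (RelA n β → ∀ k : ℕ, k + 2 ≤ 2 * n →
      β (List.replicate k 0 ++ [1, 1]) =
        β (List.replicate k 0) - β (List.replicate (k + 2) 0)) ∧
    ((RelB n β ∨ RelC n β) → β [0] = 0) ∧
    (RelB n β → ∀ k : ℕ, k + 2 ≤ 2 * n →
      β (List.replicate k 0 ++ [1, 1]) = β (List.replicate k 0)) ∧
    (RelC n β → ∀ k : ℕ, k + 2 ≤ 2 * n →
      β (List.replicate k 0 ++ [1, 1]) =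
        β (List.replicate k 0) + β (List.replicate (k + 2) 0)) ∧
    (RelD n β → ∀ k : ℕ, k + 2 ≤ 2 * n →
      β (List.replicate k 0 ++ [1, 1]) = β (List.replicate (k + 2) 0)) :=
  stmt17_general n hn β hrel1 hrel2 hmeas
end
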